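/- Let B₄ be the Artin braid group on 4 strands with generators σ₁, σ₂, σ₃. In the quotient group B₄/⟨⟨σ₂σ₃²σ₂σ₁²⟩⟩ (quotient by the normal closure of the single element σ₂σ₃²σ₂σ₁²), the identity σ₁⁻²σ₂σ₁² = σ₃⁻²σ₂σ₃² holds. -/
import Mathlib


/-- The braid relations on `n` generators `σ₁, …, σₙ` (indexed by `Fin n`):
commutation `σᵢσⱼ = σⱼσᵢ` for `|i−j| ≥ 2` and `σᵢσᵢ₊₁σᵢ = σᵢ₊₁σᵢσᵢ₊₁`. -/
def braidRels (n : ℕ) : Set (FreeGroup (Fin n)) :=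
  {r | ∃ i j : Fin n, (i : ℕ) + 2 ≤ (j : ℕ) ∧
      r = FreeGroup.of i * FreeGroup.of j * (FreeGroup.of i)⁻¹ * (FreeGroup.of j)⁻¹} ∪
  {r | ∃ i j : Fin n, (j : ℕ) = (i : ℕ) + 1 ∧
      r = FreeGroup.of i * FreeGroup.of j * FreeGroup.of i *
        (FreeGroup.of j * FreeGroup.of i * FreeGroup.of j)⁻¹}

/-- The Artin braid group `B₄` on 4 strands (3 generators). -/
abbrev B4 : Type := PresentedGroup (braidRels 3)

/-- The standard generators `σ₁, σ₂, σ₃` of `B₄` (indexed by `Fin 3`, so `σⱼ₊₁ = g j`). -/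
def g (i : Fin 3) : B4 := PresentedGroup.of i

lemma aux {G : Type*} [Group G] (a b c : G) (h2 : b*c*b = c*b*c)
    (h4 : b*c^2*b*a^2 = 1) : (a^2)⁻¹*b*a^2 = (c^2)⁻¹*b*c^2 := by
  have h4' : (b*c^2*b)*a^2 = 1 := by rw [← h4]
  have ha : a^2 = (b*c^2*b)⁻¹ := (inv_eq_of_mul_eq_one_right h4').symm
  have hcm : (b*c^2*b)*c^2 = c^2*(b*c^2*b) := by
    have e1 : (b*c^2*b)*c^2 = (b*c*b)*(c*b*c) := by
      calc (b*c^2*b)*c^2 = b*c*(c*b*c)*c := by simp [pow_two, mul_assoc]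
      _ = b*c*(b*c*b)*c := by rw [← h2]
      _ = (b*c*b)*(c*b*c) := by simp [mul_assoc]
    have e2 : c^2*(b*c^2*b) = (c*b*c)*(b*c*b) := by
      calc c^2*(b*c^2*b) = c*(c*b*c)*(c*b) := by simp [pow_two, mul_assoc]
      _ = c*(b*c*b)*(c*b) := by rw [← h2]
      _ = (c*b*c)*(b*c*b) := by simp [mul_assoc]
    rw [e1, e2, h2]
  have h5 : c^2*((b*c^2*b)*b) = b*c^2*(b*c^2*b) := by
    calc c^2*((b*c^2*b)*b) = (c^2*(b*c^2*b))*b := by group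
    _ = ((b*c^2*b)*c^2)*b := by rw [hcm]
    _ = b*c^2*(b*c^2*b) := by group
  rw [ha, inv_inv]
  calc (b*c^2*b)*b*(b*c^2*b)⁻¹
      = (c^2)⁻¹*(c^2*((b*c^2*b)*b))*(b*c^2*b)⁻¹ := by group
    _ = (c^2)⁻¹*(b*c^2*(b*c^2*b))*(b*c^2*b)⁻¹ := by rw [h5]
    _ = (c^2)⁻¹*b*c^2 := by group

lemma braid12 : g 1 * g 2 * g 1 = g 2 * g 1 * g 2 := by
  have hr : (FreeGroup.of (1 : Fin 3) * FreeGroup.of (2 : Fin 3) * FreeGroup.of 1 *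
      (FreeGroup.of (2 : Fin 3) * FreeGroup.of 1 * FreeGroup.of 2)⁻¹) ∈ braidRels 3 :=
    Or.inr ⟨1, 2, rfl, rfl⟩
  have h1 : PresentedGroup.mk (braidRels 3) (FreeGroup.of 1 * FreeGroup.of 2 * FreeGroup.of 1 *
      (FreeGroup.of 2 * FreeGroup.of 1 * FreeGroup.of 2)⁻¹) = 1 :=
    (QuotientGroup.eq_one_iff _).mpr (Subgroup.subset_normalClosure hr)
  rw [map_mul, map_mul, map_inv, map_mul, map_mul, mul_inv_eq_one] at h1
  exact h1

/-- In `B₄/⟨⟨σ₂σ₃²σ₂σ₁²⟩⟩`, the identity `σ₁⁻²σ₂σ₁² = σ₃⁻²σ₂σ₃²` holds. -/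
theorem stmt5 :
    QuotientGroup.mk (s := Subgroup.normalClosure {g 1 * g 2 ^ 2 * g 1 * g 0 ^ 2})
      ((g 0 ^ 2)⁻¹ * g 1 * g 0 ^ 2) =
    QuotientGroup.mk (s := Subgroup.normalClosure {g 1 * g 2 ^ 2 * g 1 * g 0 ^ 2})
      ((g 2 ^ 2)⁻¹ * g 1 * g 2 ^ 2) := by
  set N := Subgroup.normalClosure {g 1 * g 2 ^ 2 * g 1 * g 0 ^ 2} with hN
  have h2 : (↑(g 1) : B4 ⧸ N) * ↑(g 2) * ↑(g 1) = ↑(g 2) * ↑(g 1) * ↑(g 2) := by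
    rw [← QuotientGroup.mk_mul, ← QuotientGroup.mk_mul, ← QuotientGroup.mk_mul,
      ← QuotientGroup.mk_mul, braid12]
  have h4 : (↑(g 1) : B4 ⧸ N) * (↑(g 2))^2 * ↑(g 1) * (↑(g 0))^2 = 1 := by
    rw [← QuotientGroup.mk_pow, ← QuotientGroup.mk_pow, ← QuotientGroup.mk_mul,
      ← QuotientGroup.mk_mul, ← QuotientGroup.mk_mul]
    exact (QuotientGroup.eq_one_iff _).mpr (Subgroup.subset_normalClosure rfl)
  have := aux (G := B4 ⧸ N) (↑(g 0)) (↑(g 1)) (↑(g 2)) h2 h4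
  simpa [QuotientGroup.mk_mul, QuotientGroup.mk_inv, QuotientGroup.mk_pow] using this
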